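/- Let L be a finitely generated free ℤ-module and B : L → L → ℤ a symmetric ℤ-bilinear form. Let S ⊆ L be a finite subset and T the ℤ-submodule spanned by S, and assume B is negative definite on T, i.e. B(t, t) < 0 for every nonzero t ∈ T. Let a ∈ L satisfy B(a, s) = 0 for every s ∈ S. If the set of natural numbers k for which there exist b ∈ L and t ∈ T with a = k • b + t is infinite, then a = 0. -/

import Mathlib

/-!
Reducing modulo `T`, the class of `a` in the finitely generated group `L ⧸ T` is divisible by
infinitely many integers, hence zero in the free quotient by the torsion; so `m • a ∈ T` for some
`m ≠ 0`. Since `a` is orthogonal to `T`, `B (m • a) (m • a) = m * B a (m • a) = 0`, and negative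
definiteness on `T` gives `m • a = 0`, hence `a = 0` as `L` is torsion-free.
-/

theorem Int.eq_zero_of_setOf_natCast_dvd_infinite {n : ℤ}
    (h : {k : ℕ | (k : ℤ) ∣ n}.Infinite) : n = 0 := by
  by_contra hn
  refine h ((Nat.divisors n.natAbs).finite_toSet.subset fun k hk => ?_)
  simpa [hn] using Int.natCast_dvd.1 hk

theorem Module.eq_zero_of_setOf_nsmul_dvd_infinite {M : Type*} [AddCommGroup M]
    [Module.Finite ℤ M] [Module.Free ℤ M] {x : M}
    (h : {k : ℕ | ∃ y : M, x = k • y}.Infinite) : x = 0 := by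
  let b := Module.Free.chooseBasis ℤ M
  refine b.repr.map_eq_zero_iff.1 (Finsupp.ext fun i => ?_)
  refine Int.eq_zero_of_setOf_natCast_dvd_infinite (h.mono fun k hk => ?_)
  obtain ⟨y, hy⟩ := hk
  exact ⟨b.repr y i, by simp [hy]⟩

theorem Submodule.mem_torsion_of_setOf_nsmul_dvd_infinite {G : Type*} [AddCommGroup G]
    [Module.Finite ℤ G] {x : G} (h : {k : ℕ | ∃ y : G, x = k • y}.Infinite) :
    x ∈ Submodule.torsion ℤ G := by
  let π := (Submodule.torsion ℤ G).mkQ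
  rw [← Submodule.Quotient.mk_eq_zero, ← Submodule.mkQ_apply]
  refine Module.eq_zero_of_setOf_nsmul_dvd_infinite (h.mono fun k hk => ?_)
  obtain ⟨y, hy⟩ := hk
  exact ⟨π y, by rw [hy, map_nsmul]⟩

theorem LinearMap.smul_eq_zero_of_smul_mem_of_le_ker {R M : Type*} [CommRing R] [Preorder R]
    [AddCommGroup M] [Module R M] (B : M →ₗ[R] M →ₗ[R] R) {T : Submodule R M}
    (hneg : ∀ t ∈ T, t ≠ 0 → B t t < 0) {a : M} (haT : T ≤ LinearMap.ker (B a)) {m : R}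
    (hm : m • a ∈ T) : m • a = 0 := by
  by_contra hne
  have hBa : B a (m • a) = 0 := haT hm
  have : B (m • a) (m • a) = 0 := by rw [B.map_smul, LinearMap.smul_apply, hBa, smul_zero]
  exact (hneg _ hm hne).ne this

theorem eq_zero_of_orth_negdef_infinitely_divisible_mod_general (L : Type*) [AddCommGroup L]
    [Module.Finite ℤ L] [Module.Free ℤ L]
    (B : L →ₗ[ℤ] L →ₗ[ℤ] ℤ)
    (S : Set L)
    (hneg : ∀ t ∈ Submodule.span ℤ S, t ≠ 0 → B t t < 0)
    (a : L) (ha : ∀ s ∈ S, B a s = 0)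
    (h : {k : ℕ | ∃ b : L, ∃ t ∈ Submodule.span ℤ S, a = k • b + t}.Infinite) :
    a = 0 := by
  set T := Submodule.span ℤ S
  have hdiv : {k : ℕ | ∃ y, T.mkQ a = k • y}.Infinite := by
    refine h.mono fun k hk => ?_
    obtain ⟨b, t, ht, hab⟩ := hk
    refine ⟨T.mkQ b, ?_⟩
    rw [hab, map_add, map_nsmul, T.mkQ_apply t, (Submodule.Quotient.mk_eq_zero T).2 ht, add_zero]
  obtain ⟨⟨m, hm⟩, hma⟩ := (Submodule.mem_torsion_iff _).1
    (Submodule.mem_torsion_of_setOf_nsmul_dvd_infinite hdiv)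
  have hmT : m • a ∈ T := by rwa [← Submodule.Quotient.mk_eq_zero, Submodule.Quotient.mk_smul]
  have hm0 : m ≠ 0 := nonZeroDivisors.ne_zero hm
  exact (smul_eq_zero_iff_right hm0).1 <| B.smul_eq_zero_of_smul_mem_of_le_ker hneg
    (Submodule.span_le.2 ha) hmT

/-- Let `L` be a finitely generated free `ℤ`-module with a symmetric bilinear form
`B : L → L → ℤ`. Let `S ⊆ L` be a finite subset spanning the submodule `T`, on which `B`
is negative definite, and let `a ∈ L` be orthogonal to every element of `S`. If there are
infinitely many `k ∈ ℕ` for which `a = k • b + t` with `b ∈ L`, `t ∈ T`, then `a = 0`. -/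
theorem eq_zero_of_orth_negdef_infinitely_divisible_mod (L : Type*) [AddCommGroup L]
    [Module.Finite ℤ L] [Module.Free ℤ L]
    (B : L →ₗ[ℤ] L →ₗ[ℤ] ℤ) (hsymm : ∀ x y, B x y = B y x)
    (S : Set L) (hS : S.Finite)
    (hneg : ∀ t ∈ Submodule.span ℤ S, t ≠ 0 → B t t < 0)
    (a : L) (ha : ∀ s ∈ S, B a s = 0)
    (h : {k : ℕ | ∃ b : L, ∃ t ∈ Submodule.span ℤ S, a = k • b + t}.Infinite) :
    a = 0 :=
  eq_zero_of_orth_negdef_infinitely_divisible_mod_general L B S hneg a ha h
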